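/- arXiv:1907.08247 — 2 statements merged into one kernel-verified Lean document; each statement's English description precedes it below -/
import Mathlib

section
/- Let Φ be the fixed point starting with 0 of the morphism φ: 0 ↦ 00101, 1 ↦ 11011. For every integer C ≥ 4 and every n ≥ 132·5^{C−4}, there is a factor of Φ of length n containing at least n/3 + C zeros, and also a factor of length n containing at most n/3 − C zeros. -/
/-- the 5-uniform morphism φ: 0 ↦ 00101, 1 ↦ 11011 (on letters). -/
def phiMap (x : ℕ) : List ℕ := if x = 0 then [0, 0, 1, 0, 1] else [1, 1, 0, 1, 1]

/-- φ applied to a word. -/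
def phiL (l : List ℕ) : List ℕ := l.flatMap phiMap

/-- `Phi m` is the `m`-th letter (0-indexed) of the fixed point Φ = φ^ω(0) of φ
starting with 0: `φ^[m+1]([0])` has length `5^(m+1) > m` and is a prefix of Φ. -/
def Phi (m : ℕ) : ℕ := (phiL^[m + 1] [0]).getD m 0

/-- the length-`n` factor of `w` starting at position `i`. -/
def factorAt (w : ℕ → ℕ) (i n : ℕ) : List ℕ := (List.range n).map (fun j => w (i + j))

/-- `u` is a factor of the infinite word `w`. -/
def IsFactor (w : ℕ → ℕ) (u : List ℕ) : Prop := ∃ i, u = factorAt w i u.length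

/-!
Write `β(u) = 3|u|₀ - |u|` for the zero balance of a word. It is additive, and since
`β(φ(0)) = 4 = 2β(0)` and `β(φ(1)) = -2 = 2β(1)`, it doubles under `φ`. Because
`Φ = φ(Φ)`, the factor of length `n` at position `5i` is `φ(v)` with at most four letters
cut off, where `v` is the factor of length `⌈n/5⌉` at position `i`; the cut-off letters
form a proper suffix of `φ(0)` or `φ(1)` and have balance in `[-2, 2]`. Hence a balance
`≥ d` (or `≤ -d`) at length `m` yields one `≥ 2d - 2` (or `≤ -(2d - 2)`) at every length
`n` with `⌈n/5⌉ = m`. A balance of `±12` at all lengths in `[132, 660)`, checked by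
computation, thus grows to `±(10·2^k + 2)` at lengths `n ≥ 132·5^k`, and
`10·2^(C-4) + 2 ≥ 3C`.
-/

lemma phiL_cons (a : ℕ) (l : List ℕ) : phiL (a :: l) = phiMap a ++ phiL l :=
  List.flatMap_cons ..

lemma phiL_append (l l' : List ℕ) : phiL (l ++ l') = phiL l ++ phiL l' :=
  List.flatMap_append ..

lemma length_phiMap (x : ℕ) : (phiMap x).length = 5 := by
  unfold phiMap; split <;> rfl

lemma length_phiL (l : List ℕ) : (phiL l).length = 5 * l.length := by
  induction l with
  | nil => rfl
  | cons a t ih => rw [phiL_cons, List.length_append, length_phiMap, ih, List.length_cons]; ring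

lemma List.IsPrefix.phiL {l l' : List ℕ} (h : l <+: l') : phiL l <+: phiL l' := by
  obtain ⟨t, rfl⟩ := h
  exact ⟨_, (phiL_append l t).symm⟩

lemma getD_phiL (l : List ℕ) {j : ℕ} (hj : j < 5 * l.length) :
    (phiL l).getD j 0 = (phiMap (l.getD (j / 5) 0)).getD (j % 5) 0 := by
  induction l generalizing j with
  | nil => simp at hj
  | cons a t ih =>
    rw [phiL_cons]
    rcases Nat.lt_or_ge j 5 with hj5 | hj5
    · rw [List.getD_append _ _ _ _ (by rw [length_phiMap]; exact hj5),
        Nat.div_eq_of_lt hj5, Nat.mod_eq_of_lt hj5, List.getD_cons_zero]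
    · obtain ⟨j, rfl⟩ := Nat.exists_eq_add_of_le' hj5
      rw [List.getD_append_right _ _ _ _ (by rw [length_phiMap]; omega), length_phiMap,
        Nat.add_sub_cancel, ih (by simp at hj; omega), Nat.add_div_right _ (by norm_num),
        Nat.add_mod_right, List.getD_cons_succ]

lemma lt_five_pow_succ (m : ℕ) : m < 5 ^ (m + 1) :=
  (Nat.lt_pow_self (by norm_num)).trans (Nat.pow_lt_pow_succ (by norm_num))

def phiIter (k : ℕ) : List ℕ := phiL^[k] [0]

lemma phiIter_succ (k : ℕ) : phiIter (k + 1) = phiL (phiIter k) :=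
  Function.iterate_succ_apply' ..

lemma length_phiIter (k : ℕ) : (phiIter k).length = 5 ^ k := by
  induction k with
  | zero => rfl
  | succ k ih => rw [phiIter_succ, length_phiL, ih, pow_succ, mul_comm]

lemma phiIter_prefix_succ (k : ℕ) : phiIter k <+: phiIter (k + 1) := by
  induction k with
  | zero => exact ⟨[0, 1, 0, 1], rfl⟩
  | succ k ih => rw [phiIter_succ, phiIter_succ (k + 1)]; exact ih.phiL

lemma phiIter_prefix_of_le {j k : ℕ} (h : j ≤ k) : phiIter j <+: phiIter k := by
  induction h with
  | refl => exact List.prefix_refl _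
  | step _ ih => exact ih.trans (phiIter_prefix_succ _)

lemma Phi_eq_getD_phiIter {m : ℕ} (K : ℕ) (h : m < 5 ^ K) : Phi m = (phiIter K).getD m 0 := by
  have getD_eq {j k : ℕ} (hjk : j ≤ k) (hm : m < 5 ^ j) :
      (phiIter k).getD m 0 = (phiIter j).getD m 0 := by
    have hm' : m < (phiIter j).length := by rwa [length_phiIter]
    rw [List.getD_eq_getElem _ _ hm', (phiIter_prefix_of_le hjk).getElem hm',
      List.getD_eq_getElem]
  calc Phi m = (phiIter (m + 1)).getD m 0 := rfl
    _ = (phiIter (max (m + 1) K)).getD m 0 := (getD_eq (le_max_left ..) (lt_five_pow_succ m)).symm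
    _ = (phiIter K).getD m 0 := getD_eq (le_max_right ..) h

lemma Phi_five_mul_add (q : ℕ) {r : ℕ} (hr : r < 5) :
    Phi (5 * q + r) = (phiMap (Phi q)).getD r 0 := by
  have hq := lt_five_pow_succ q
  rw [Phi_eq_getD_phiIter (q + 2) (by rw [pow_succ]; omega), Phi_eq_getD_phiIter _ hq,
    phiIter_succ, getD_phiL _ (by rw [length_phiIter]; omega), Nat.mul_add_div (by norm_num),
    Nat.div_eq_of_lt hr, add_zero, Nat.mul_add_mod, Nat.mod_eq_of_lt hr]

lemma length_factorAt (w : ℕ → ℕ) (i n : ℕ) : (factorAt w i n).length = n := by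
  simp [factorAt]

lemma getElem_factorAt (w : ℕ → ℕ) (i n j : ℕ) (hj : j < (factorAt w i n).length) :
    (factorAt w i n)[j] = w (i + j) := by
  simp [factorAt]

lemma factorAt_isFactor (w : ℕ → ℕ) (i n : ℕ) : IsFactor w (factorAt w i n) :=
  ⟨i, by rw [length_factorAt]⟩

lemma factorAt_Phi_eq_take_drop (K : ℕ) {i n : ℕ} (h : i + n ≤ 5 ^ K) :
    factorAt Phi i n = ((phiIter K).drop i).take n := by
  apply List.ext_getElem
  · simp [length_factorAt, length_phiIter]; omega
  · intro j hj _
    rw [getElem_factorAt, List.getElem_take, List.getElem_drop,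
      Phi_eq_getD_phiIter K (by rw [length_factorAt] at hj; omega), List.getD_eq_getElem]

lemma factorAt_Phi_five_mul (i : ℕ) {m n : ℕ} (h : n ≤ 5 * m) :
    factorAt Phi (5 * i) n = (phiL (factorAt Phi i m)).take n := by
  apply List.ext_getElem
  · simp [length_factorAt, length_phiL]; omega
  · intro j hj _
    rw [length_factorAt] at hj
    have hj' : j < 5 * (factorAt Phi i m).length := by rw [length_factorAt]; omega
    rw [getElem_factorAt, List.getElem_take,
      ← List.getD_eq_getElem _ 0 (by rw [length_phiL]; omega), getD_phiL _ hj',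
      List.getD_eq_getElem (factorAt Phi i m) _ (by rw [length_factorAt]; omega),
      getElem_factorAt, show 5 * i + j = 5 * (i + j / 5) + j % 5 by omega,
      Phi_five_mul_add _ (Nat.mod_lt _ (by norm_num))]

def zeroBalance (u : List ℕ) : ℤ := 3 * u.count 0 - u.length

lemma cast_zeroBalance (u : List ℕ) :
    (zeroBalance u : ℚ) = 3 * u.count 0 - u.length := by
  simp [zeroBalance]

lemma zeroBalance_append (u v : List ℕ) :
    zeroBalance (u ++ v) = zeroBalance u + zeroBalance v := by
  simp only [zeroBalance, List.count_append, List.length_append]; push_cast; ring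

lemma zeroBalance_phiMap (x : ℕ) : zeroBalance (phiMap x) = 2 * zeroBalance [x] := by
  by_cases hx : x = 0
  · subst hx; rfl
  · simp [phiMap, hx, zeroBalance]

lemma zeroBalance_phiL (u : List ℕ) : zeroBalance (phiL u) = 2 * zeroBalance u := by
  induction u with
  | nil => rfl
  | cons a t ih =>
    rw [phiL_cons, zeroBalance_append, zeroBalance_phiMap, ih, ← List.singleton_append (l := t),
      zeroBalance_append, mul_add]

lemma abs_zeroBalance_drop_phiMap (x : ℕ) {j : ℕ} (hj : 0 < j) :
    |zeroBalance ((phiMap x).drop j)| ≤ 2 := by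
  rcases Nat.lt_or_ge j 5 with hj5 | hj5
  · unfold phiMap
    split <;> interval_cases j <;> decide
  · rw [List.drop_of_length_le (by rw [length_phiMap]; exact hj5)]
    decide

/-- A proper suffix of `φ(u)` is a proper suffix of the image of the last letter of `u`. -/
lemma abs_zeroBalance_of_suffix_phiL {u v : List ℕ} (hv : v <:+ phiL u) (hlen : v.length < 5) :
    |zeroBalance v| ≤ 2 := by
  rcases u.eq_nil_or_concat with rfl | ⟨u, x, rfl⟩
  · rw [List.eq_nil_of_suffix_nil hv]; decide
  · have hx : phiMap x <:+ phiL (u.concat x) := by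
      rw [List.concat_eq_append, phiL_append]; exact ⟨phiL u, by simp [phiL]⟩
    rw [List.suffix_iff_eq_drop.1 (List.suffix_of_suffix_length_le hv hx
      (by rw [length_phiMap]; omega))]
    exact abs_zeroBalance_drop_phiMap x (by rw [length_phiMap]; omega)

lemma abs_zeroBalance_take_phiL_sub_le (u : List ℕ) {n : ℕ} (h₁ : n ≤ 5 * u.length)
    (h₂ : 5 * u.length < n + 5) :
    |zeroBalance ((phiL u).take n) - 2 * zeroBalance u| ≤ 2 := by
  have hsplit := congrArg zeroBalance (List.take_append_drop n (phiL u))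
  rw [zeroBalance_append, zeroBalance_phiL] at hsplit
  rw [← hsplit, sub_add_cancel_left, abs_neg]
  exact abs_zeroBalance_of_suffix_phiL (List.drop_suffix n _)
    (by rw [List.length_drop, length_phiL]; omega)

lemma le_mul_zeroBalance_factorAt_five_mul {s d : ℤ} (hs : |s| ≤ 1) {i m n : ℕ}
    (h₁ : n ≤ 5 * m) (h₂ : 5 * m < n + 5) (hd : d ≤ s * zeroBalance (factorAt Phi i m)) :
    2 * d - 2 ≤ s * zeroBalance (factorAt Phi (5 * i) n) := by
  have hlen : (factorAt Phi i m).length = m := length_factorAt ..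
  have hdiff := abs_zeroBalance_take_phiL_sub_le (factorAt Phi i m) (n := n)
    (by rw [hlen]; exact h₁) (by rw [hlen]; exact h₂)
  rw [← factorAt_Phi_five_mul i h₁] at hdiff
  set a := zeroBalance (factorAt Phi (5 * i) n)
  set b := zeroBalance (factorAt Phi i m)
  have hsdiff : |s * (a - 2 * b)| ≤ 2 := by
    rw [abs_mul]
    exact (mul_le_of_le_one_left (abs_nonneg _) hs).trans hdiff
  linarith [neg_abs_le (s * (a - 2 * b))]

set_option maxRecDepth 100000 in
lemma seven_le_zeroBalance_take_phiIter_four :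
    ∀ m < 133, 27 ≤ m → 7 ≤ zeroBalance ((phiIter 4).take m) := by
  decide

/- The positions below were found by a computer search. No factor of `Φ` of length 27 or 30 has
balance `≤ -7`, so the lengths `n` with `⌈n/5⌉ ∈ {27, 30}` are checked directly. -/
set_option maxRecDepth 100000 in
lemma zeroBalance_take_drop_phiIter_five_le_neg_seven : ∀ m < 133, 28 ≤ m → m ≠ 30 →
    zeroBalance (((phiIter 5).drop 1194).take m) ≤ -7 ∨
      zeroBalance (((phiIter 5).drop 243).take m) ≤ -7 := by
  decide

set_option maxRecDepth 100000 in
lemma zeroBalance_take_drop_phiIter_five_le_neg_twelve :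
    ∀ n < 151, 132 ≤ n → (n ≤ 135 ∨ 146 ≤ n) →
    zeroBalance (((phiIter 5).drop 223).take n) ≤ -12 ∨
      zeroBalance (((phiIter 5).drop 1111).take n) ≤ -12 := by
  decide

theorem exists_le_mul_zeroBalance_factorAt {s d : ℤ} (hs : |s| ≤ 1) (hd : 2 ≤ d) {N : ℕ}
    (hN : 0 < N)
    (hbase : ∀ n, N ≤ n → n < 5 * N → ∃ i, d ≤ s * zeroBalance (factorAt Phi i n))
    (k : ℕ) {n : ℕ} (hn : N * 5 ^ k ≤ n) :
    ∃ i, (d - 2) * 2 ^ k + 2 ≤ s * zeroBalance (factorAt Phi i n) := by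
  induction n using Nat.strong_induction_on generalizing k with
  | _ n ih =>
  have lift {k' : ℕ} (hn5 : 5 ≤ n) (hk' : N * 5 ^ k' ≤ (n + 4) / 5)
      (hbound : (d - 2) * 2 ^ k + 2 ≤ 2 * ((d - 2) * 2 ^ k' + 2) - 2) :
      ∃ i, (d - 2) * 2 ^ k + 2 ≤ s * zeroBalance (factorAt Phi i n) := by
    obtain ⟨i, hi⟩ := ih ((n + 4) / 5) (by omega) k' hk'
    exact ⟨5 * i,
      hbound.trans (le_mul_zeroBalance_factorAt_five_mul hs (by omega) (by omega) hi)⟩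
  rcases k with _ | k
  · rcases Nat.lt_or_ge n (5 * N) with hlt | hge
    · simpa using hbase n (by simpa using hn) hlt
    · exact lift (k' := 0) (by omega) (by simp; omega) (by simp; linarith)
  · rw [pow_succ, ← mul_assoc] at hn
    have : 0 < N * 5 ^ k := by positivity
    exact lift (k' := k) (by omega) (by omega) (by rw [pow_succ]; linarith)

lemma exists_twelve_le_zeroBalance_factorAt {n : ℕ} (h₁ : 132 ≤ n) (h₂ : n < 660) :
    ∃ i, 12 ≤ zeroBalance (factorAt Phi i n) := by
  have hm : 7 ≤ 1 * zeroBalance (factorAt Phi 0 ((n + 4) / 5)) := by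
    rw [one_mul, factorAt_Phi_eq_take_drop 4 (by omega), List.drop_zero]
    exact seven_le_zeroBalance_take_phiIter_four _ (by omega) (by omega)
  have h := le_mul_zeroBalance_factorAt_five_mul (by norm_num) (n := n) (by omega) (by omega) hm
  exact ⟨0, by simpa using h⟩

lemma exists_zeroBalance_factorAt_le_neg_twelve {n : ℕ} (h₁ : 132 ≤ n) (h₂ : n < 660) :
    ∃ i, zeroBalance (factorAt Phi i n) ≤ -12 := by
  have slice {i : ℕ} (hi : i + n ≤ 5 ^ 5)
      (h : zeroBalance (((phiIter 5).drop i).take n) ≤ -12) :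
      ∃ i, zeroBalance (factorAt Phi i n) ≤ -12 :=
    ⟨i, by rwa [factorAt_Phi_eq_take_drop 5 hi]⟩
  by_cases hdirect : n ≤ 135 ∨ (146 ≤ n ∧ n ≤ 150)
  · rcases zeroBalance_take_drop_phiIter_five_le_neg_twelve n (by omega) h₁ (by omega) with h | h
    · exact slice (by norm_num; omega) h
    · exact slice (by norm_num; omega) h
  have lift (i : ℕ) (hi : zeroBalance (factorAt Phi i ((n + 4) / 5)) ≤ -7) :
      ∃ i, zeroBalance (factorAt Phi i n) ≤ -12 := by
    have hi' : 7 ≤ -1 * zeroBalance (factorAt Phi i ((n + 4) / 5)) := by linarith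
    have h := le_mul_zeroBalance_factorAt_five_mul (by norm_num) (n := n) (by omega) (by omega) hi'
    exact ⟨5 * i, by linarith⟩
  rcases zeroBalance_take_drop_phiIter_five_le_neg_seven ((n + 4) / 5) (by omega) (by omega)
    (by omega) with h | h
  · exact lift 1194 (by rwa [factorAt_Phi_eq_take_drop 5 (by norm_num; omega)])
  · exact lift 243 (by rwa [factorAt_Phi_eq_take_drop 5 (by norm_num; omega)])

lemma exists_le_zeroBalance_factorAt (k : ℕ) {n : ℕ} (hn : 132 * 5 ^ k ≤ n) :
    ∃ i, 10 * 2 ^ k + 2 ≤ zeroBalance (factorAt Phi i n) := by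
  simpa using exists_le_mul_zeroBalance_factorAt (s := 1) (d := 12) le_rfl
    (by norm_num) (by norm_num)
    (fun _ h₁ h₂ => by simpa using exists_twelve_le_zeroBalance_factorAt h₁ h₂) k hn

lemma exists_le_neg_zeroBalance_factorAt (k : ℕ) {n : ℕ} (hn : 132 * 5 ^ k ≤ n) :
    ∃ i, 10 * 2 ^ k + 2 ≤ -zeroBalance (factorAt Phi i n) := by
  simpa using exists_le_mul_zeroBalance_factorAt (s := -1) (d := 12) (by norm_num)
    (by norm_num) (by norm_num)
    (fun _ h₁ h₂ => by simpa [le_neg] using exists_zeroBalance_factorAt_le_neg_twelve h₁ h₂)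
    k hn

/-- For every `C ≥ 4` and every `n ≥ 132 * 5^(C-4)`, Φ has a factor of length `n`
with at least `n/3 + C` zeros, and a factor of length `n` with at most `n/3 - C` zeros. -/
theorem Phi_many_and_few_zeros (C : ℕ) (hC : 4 ≤ C) (n : ℕ)
    (hn : 132 * 5 ^ (C - 4) ≤ n) :
    (∃ u : List ℕ, IsFactor Phi u ∧ u.length = n ∧
      (n : ℚ) / 3 + C ≤ (u.count 0 : ℚ)) ∧
    (∃ u : List ℕ, IsFactor Phi u ∧ u.length = n ∧
      (u.count 0 : ℚ) ≤ (n : ℚ) / 3 - C) := by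
  have hC' : (3 * C : ℤ) ≤ 10 * 2 ^ (C - 4) + 2 := by
    have : C - 4 < 2 ^ (C - 4) := Nat.lt_two_pow_self
    zify [hC] at this
    linarith
  obtain ⟨i, hi⟩ := exists_le_zeroBalance_factorAt (C - 4) hn
  obtain ⟨j, hj⟩ := exists_le_neg_zeroBalance_factorAt (C - 4) hn
  have hi' : (3 * C : ℚ) ≤ zeroBalance (factorAt Phi i n) := by exact_mod_cast hC'.trans hi
  have hj' : (3 * C : ℚ) ≤ -zeroBalance (factorAt Phi j n) := by exact_mod_cast hC'.trans hj
  rw [cast_zeroBalance, length_factorAt] at hi' hj'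
  exact ⟨⟨_, factorAt_isFactor Phi i n, length_factorAt .., by linarith⟩,
    ⟨_, factorAt_isFactor Phi j n, length_factorAt .., by linarith⟩⟩
end

section
/- Let f be the Fibonacci word over {0,1}. For every factor w of f and every m ≥ 1, the set { (|u|_0 mod m, |u|_1 mod m) : u is a prefix of f followed immediately by an occurrence of w } equals all of (ℤ/mℤ)²; in the special case m = 2, for every factor w of f there exist occurrences of w in f preceded by an even number of 0's and occurrences preceded by an odd number of 0's. -/
/-!
Write `T` for the map `(a, b) ↦ (b, b + a)` on `(ℤ/mℤ)²`: the pair (number of 0's, length) of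
`φ(u)` is `T` applied to that of `u`, where `φ` is the Fibonacci morphism. If `u` is a prefix of
`f`, so are `φ(u)` and `φ(u)0`; hence the set `R` of these pairs over the prefixes of `f` contains
`0` and is stable under `q ↦ T q` and `q ↦ T q + (1, 1)`. As `T` is a bijection of a finite set,
`R` is also stable under `T⁻¹`, so under `+ (1, 1)` and `+ (1, 2)`, and `R` is everything.

Now let `v` occur in `f` after the prefix `W`, with `W v` a prefix of `φⁿ(0)`. For every prefix
`u` of `f`, `φⁿ⁺¹(u) φⁿ(0)` is again a prefix of `f` (apply `φⁿ` to the prefix `φ(u)0`), so `v`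
occurs after `φⁿ⁺¹(u) W`. The Parikh vector of `φⁿ⁺¹(u)` is determined by `Tⁿ` of the pair of `u`,
and `Tⁿ` is onto, so these prefixes realise every class modulo `m`.
-/

/-- the morphism 0 ↦ 01, 1 ↦ 0 (on letters). -/
def fibMap (x : ℕ) : List ℕ := if x = 0 then [0, 1] else [0]

/-- the morphism 0 ↦ 01, 1 ↦ 0 applied to a word. -/
def fibL (l : List ℕ) : List ℕ := l.flatMap fibMap

/-- the `m`-th letter (0-indexed) of the Fibonacci word, the fixed point of
0 ↦ 01, 1 ↦ 0 starting with 0: the iterate applied `m+1` times to `[0]` has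
length `> m` and is a prefix of the fixed point. -/
def Fib (m : ℕ) : ℕ := (fibL^[m + 1] [0]).getD m 0

def fibIter (n : ℕ) : List ℕ := fibL^[n] [0]

lemma fibL_append (u w : List ℕ) : fibL (u ++ w) = fibL u ++ fibL w := List.flatMap_append

lemma fibL_cons (x : ℕ) (u : List ℕ) : fibL (x :: u) = fibMap x ++ fibL u := rfl

lemma length_fibL (u : List ℕ) : (fibL u).length = u.length + u.count 0 := by
  induction u with
  | nil => rfl
  | cons x u ih =>
    rw [fibL_cons, List.length_append, ih, List.count_cons]
    by_cases hx : x = 0 <;> simp [fibMap, hx] <;> omega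

lemma count_zero_fibL (u : List ℕ) : (fibL u).count 0 = u.length := by
  induction u with
  | nil => rfl
  | cons x u ih =>
    rw [fibL_cons, List.count_append, ih]
    by_cases hx : x = 0 <;> simp [fibMap, hx] <;> omega

lemma count_one_fibL (u : List ℕ) : (fibL u).count 1 = u.count 0 := by
  induction u with
  | nil => rfl
  | cons x u ih =>
    rw [fibL_cons, List.count_append, ih, List.count_cons]
    by_cases hx : x = 0 <;> simp [fibMap, hx, add_comm]

lemma fibIter_succ (n : ℕ) : fibIter (n + 1) = fibL (fibIter n) :=
  Function.iterate_succ_apply' _ _ _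

lemma fibIter_prefix_fibIter_succ (n : ℕ) : fibIter n <+: fibIter (n + 1) := by
  induction n with
  | zero => exact ⟨[1], rfl⟩
  | succ n ih =>
    rw [fibIter_succ, fibIter_succ (n + 1)]
    exact ih.flatMap fibMap

lemma fibIter_prefix_fibIter {a b : ℕ} (h : a ≤ b) : fibIter a <+: fibIter b := by
  induction b, h using Nat.le_induction with
  | base => exact List.prefix_refl _
  | succ b _ ih => exact ih.trans (fibIter_prefix_fibIter_succ b)

lemma length_fibIter_lt_length_fibIter_succ (n : ℕ) :
    (fibIter n).length < (fibIter (n + 1)).length := by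
  have hzero : 0 < (fibIter n).count 0 :=
    List.count_pos_iff.2 ((fibIter_prefix_fibIter n.zero_le).subset (by simp [fibIter]))
  rw [fibIter_succ, length_fibL]
  omega

lemma lt_length_fibIter (n : ℕ) : n < (fibIter n).length := by
  induction n with
  | zero => simp [fibIter]
  | succ n ih => have := length_fibIter_lt_length_fibIter_succ n; omega

lemma Fib_eq_getElem_fibIter {n i : ℕ} (hi : i < (fibIter n).length) :
    Fib i = (fibIter n)[i] := by
  have hi' : i < (fibIter (i + 1)).length := by have := lt_length_fibIter (i + 1); omega
  have hFib : Fib i = (fibIter (i + 1))[i] := List.getD_eq_getElem _ _ hi'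
  rcases le_total n (i + 1) with h | h
  · rw [hFib, (fibIter_prefix_fibIter h).getElem hi]
  · rw [hFib, (fibIter_prefix_fibIter h).getElem hi']

lemma List.IsPrefix.exists_concat_prefix {α : Type*} {u l : List α} (h : u <+: l)
    (hlt : u.length < l.length) : ∃ a, u ++ [a] <+: l := by
  refine ⟨l[u.length], ?_⟩
  have := List.take_prefix (u.length + 1) l
  rwa [List.take_add_one, List.getElem?_eq_getElem hlt, ← List.prefix_iff_eq_take.1 h] at this

def IsFibPrefix (u : List ℕ) : Prop := ∃ n, u <+: fibIter n

lemma IsFibPrefix.of_prefix {u w : List ℕ} (hw : IsFibPrefix w) (huw : u <+: w) :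
    IsFibPrefix u :=
  let ⟨n, hn⟩ := hw; ⟨n, huw.trans hn⟩

lemma IsFibPrefix.map_fibL {u : List ℕ} (hu : IsFibPrefix u) : IsFibPrefix (fibL u) :=
  let ⟨n, hn⟩ := hu; ⟨n + 1, fibIter_succ n ▸ hn.flatMap fibMap⟩

lemma IsFibPrefix.fibL_append_zero {u : List ℕ} (hu : IsFibPrefix u) :
    IsFibPrefix (fibL u ++ [0]) := by
  obtain ⟨n, hn⟩ := hu
  obtain ⟨c, hc⟩ := (hn.trans (fibIter_prefix_fibIter_succ n)).exists_concat_prefix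
    (hn.length_le.trans_lt (length_fibIter_lt_length_fibIter_succ n))
  refine (IsFibPrefix.map_fibL ⟨n + 1, hc⟩).of_prefix ?_
  rw [fibL_append, List.prefix_append_right_inj, fibL_cons]
  unfold fibMap
  split <;> simp

lemma IsFibPrefix.iterate_fibL_append_fibIter {u : List ℕ} (hu : IsFibPrefix u) (N : ℕ) :
    IsFibPrefix (fibL^[N + 1] u ++ fibIter N) := by
  induction N with
  | zero => exact hu.fibL_append_zero
  | succ N ih =>
    rw [Function.iterate_succ_apply' fibL (N + 1), fibIter_succ, ← fibL_append]
    exact ih.map_fibL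

lemma IsFibPrefix.factorAt_zero {u : List ℕ} (hu : IsFibPrefix u) :
    factorAt Fib 0 u.length = u := by
  obtain ⟨n, hn⟩ := hu
  refine List.ext_getElem (by simp [factorAt]) fun j hj hju => ?_
  simp only [factorAt, List.getElem_map, List.getElem_range, zero_add]
  rw [Fib_eq_getElem_fibIter (hju.trans_le hn.length_le), hn.getElem hju]

lemma factorAt_add (w : ℕ → ℕ) (i a b : ℕ) :
    factorAt w i (a + b) = factorAt w i a ++ factorAt w (i + a) b := by
  simp [factorAt, List.range_add, Nat.add_assoc]

lemma isFibPrefix_factorAt_zero (n : ℕ) : IsFibPrefix (factorAt Fib 0 n) := by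
  have htake : IsFibPrefix ((fibIter n).take n) := ⟨n, List.take_prefix _ _⟩
  have hlen : ((fibIter n).take n).length = n := by
    simp [(lt_length_fibIter n).le]
  rw [← hlen, htake.factorAt_zero]
  exact htake

lemma IsFibPrefix.factorAt_append {u w : List ℕ} (h : IsFibPrefix (u ++ w)) :
    factorAt Fib 0 u.length = u ∧ factorAt Fib u.length w.length = w := by
  have := h.factorAt_zero
  rw [List.length_append, factorAt_add, zero_add] at this
  exact List.append_inj this (by simp [factorAt])

section Parikh

variable (m : ℕ)

-- `fibL` sends every nonzero letter to `[0]`, so unlike `parikh` this pair transforms under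
-- `fibL` without assuming that the word is binary.
def countZeroLength (u : List ℕ) : ZMod m × ZMod m := (u.count 0, u.length)

def parikh (u : List ℕ) : ZMod m × ZMod m := (u.count 0, u.count 1)

def parikhStep : ZMod m × ZMod m ≃+ ZMod m × ZMod m where
  toFun p := (p.2, p.2 + p.1)
  invFun p := (p.2 - p.1, p.1)
  left_inv p := by simp
  right_inv p := by simp
  map_add' p q := by simp only [Prod.fst_add, Prod.snd_add, Prod.mk_add_mk]; abel_nf

variable {m}

lemma countZeroLength_fibL (u : List ℕ) :
    countZeroLength m (fibL u) = parikhStep m (countZeroLength m u) := by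
  simp [countZeroLength, parikhStep, count_zero_fibL, length_fibL]

lemma countZeroLength_iterate_fibL (N : ℕ) (u : List ℕ) :
    countZeroLength m (fibL^[N] u) = (parikhStep m)^[N] (countZeroLength m u) := by
  induction N with
  | zero => rfl
  | succ N ih =>
    rw [Function.iterate_succ_apply', Function.iterate_succ_apply', ← ih, countZeroLength_fibL]

lemma parikh_append (u w : List ℕ) : parikh m (u ++ w) = parikh m u + parikh m w := by
  simp [parikh, List.count_append]

lemma parikh_fibL (u : List ℕ) : parikh m (fibL u) = (countZeroLength m u).swap := by
  simp [parikh, countZeroLength, count_zero_fibL, count_one_fibL]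

end Parikh

lemma Set.Finite.mapsTo_symm {α : Type*} {s : Set α} (hs : s.Finite) {e : α ≃ α}
    (he : Set.MapsTo e s s) : Set.MapsTo e.symm s s := by
  intro q hq
  obtain ⟨r, hr, rfl⟩ := ((hs.injOn_iff_bijOn_of_mapsTo he).1 e.injective.injOn).surjOn hq
  simpa using hr

lemma ZMod.mem_of_add_one_one_mem_of_add_one_two_mem {m : ℕ} [NeZero m]
    {S : Set (ZMod m × ZMod m)} (h0 : 0 ∈ S) (h11 : ∀ q ∈ S, q + (1, 1) ∈ S)
    (h12 : ∀ q ∈ S, q + (1, 2) ∈ S) (p : ZMod m × ZMod m) : p ∈ S := by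
  have hcomb : ∀ b a : ℕ, (((a + b : ℕ) : ZMod m), ((a + 2 * b : ℕ) : ZMod m)) ∈ S := by
    intro b a
    induction b with
    | zero =>
      induction a with
      | zero => simpa [Prod.mk_zero_zero] using h0
      | succ a ih => simpa [add_assoc] using h11 _ ih
    | succ b ih => convert h12 _ ih using 1; push_cast; ext <;> simp <;> ring
  -- `(x, y) = (2x - y) • (1, 1) + (y - x) • (1, 2)`
  convert hcomb (p.2 - p.1).val (2 * p.1 - p.2).val using 1
  push_cast [ZMod.natCast_zmod_val]
  ext <;> simp <;> ring

theorem exists_isFibPrefix_countZeroLength_eq (m : ℕ) [NeZero m] (p : ZMod m × ZMod m) :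
    ∃ u, IsFibPrefix u ∧ countZeroLength m u = p := by
  set R := {q | ∃ u, IsFibPrefix u ∧ countZeroLength m u = q}
  have hstep : Set.MapsTo (parikhStep m) R R := by
    rintro _ ⟨u, hu, rfl⟩
    exact ⟨fibL u, hu.map_fibL, countZeroLength_fibL u⟩
  have hstep_add : ∀ q ∈ R, parikhStep m q + (1, 1) ∈ R := by
    rintro _ ⟨u, hu, rfl⟩
    refine ⟨_, hu.fibL_append_zero, ?_⟩
    simp [countZeroLength, parikhStep, List.count_append, count_zero_fibL, length_fibL]
  have hinv := (Set.toFinite R).mapsTo_symm (e := (parikhStep m).toEquiv) hstep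
  have hadd11 : ∀ q ∈ R, q + (1, 1) ∈ R := fun q hq => by
    simpa using hstep_add _ (hinv hq)
  have hadd12 : ∀ q ∈ R, q + (1, 2) ∈ R := fun q hq => by
    convert hstep (hadd11 _ (hinv hq)) using 1
    ext <;> simp [parikhStep]
    ring
  have hzero : (0 : ZMod m × ZMod m) ∈ R := ⟨[], ⟨0, List.nil_prefix⟩, by simp [countZeroLength]⟩
  exact ZMod.mem_of_add_one_one_mem_of_add_one_two_mem hzero hadd11 hadd12 p

theorem exists_isFibPrefix_append_fibIter_parikh_eq (m : ℕ) [NeZero m] (N : ℕ)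
    (p : ZMod m × ZMod m) : ∃ X, IsFibPrefix (X ++ fibIter N) ∧ parikh m X = p := by
  obtain ⟨q, hq⟩ := (parikhStep m).surjective.iterate N p.swap
  obtain ⟨u, hu, rfl⟩ := exists_isFibPrefix_countZeroLength_eq m q
  refine ⟨fibL^[N + 1] u, hu.iterate_fibL_append_fibIter N, ?_⟩
  rw [Function.iterate_succ_apply', parikh_fibL, countZeroLength_iterate_fibL, hq, Prod.swap_swap]

theorem exists_occurrence_parikh_eq (m : ℕ) [NeZero m] {v : List ℕ} (hv : IsFactor Fib v)
    (p : ZMod m × ZMod m) :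
    ∃ i, factorAt Fib i v.length = v ∧ parikh m (factorAt Fib 0 i) = p := by
  obtain ⟨i₀, hocc₀⟩ := hv
  set W := factorAt Fib 0 i₀
  have hWv : IsFibPrefix (W ++ v) := by
    have : W ++ v = factorAt Fib 0 (i₀ + v.length) := by rw [factorAt_add, zero_add, ← hocc₀]
    exact this ▸ isFibPrefix_factorAt_zero _
  obtain ⟨N, hN⟩ := hWv
  obtain ⟨X, hX, hXp⟩ := exists_isFibPrefix_append_fibIter_parikh_eq m N (p - parikh m W)
  have hXWv : IsFibPrefix (X ++ W ++ v) :=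
    hX.of_prefix (by rwa [List.append_assoc, List.prefix_append_right_inj])
  obtain ⟨hpre, hocc⟩ := hXWv.factorAt_append
  refine ⟨_, hocc, ?_⟩
  rw [hpre, parikh_append, hXp, sub_add_cancel]

/-- WELLDOC property of the Fibonacci word: for every factor `v` and every `m ≥ 1`,
the pairs `(|u|₀ mod m, |u|₁ mod m)`, where `u` ranges over the prefixes of the
Fibonacci word immediately followed by an occurrence of `v`, exhaust all of
`(ℤ/mℤ)²`; in particular (case `m = 2`) `v` has occurrences preceded by an even
number of 0's and occurrences preceded by an odd number of 0's. -/
theorem fibWord_welldoc (v : List ℕ) (hv : IsFactor Fib v) :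
    (∀ m : ℕ, 1 ≤ m → ∀ p : ZMod m × ZMod m, ∃ i : ℕ,
      factorAt Fib i v.length = v ∧
      (((factorAt Fib 0 i).count 0 : ZMod m), ((factorAt Fib 0 i).count 1 : ZMod m)) = p) ∧
    (∃ i : ℕ, factorAt Fib i v.length = v ∧ Even ((factorAt Fib 0 i).count 0)) ∧
    (∃ i : ℕ, factorAt Fib i v.length = v ∧ Odd ((factorAt Fib 0 i).count 0)) := by
  refine ⟨fun m hm p => ?_, ?_, ?_⟩
  · have : NeZero m := ⟨by omega⟩
    exact exists_occurrence_parikh_eq m hv p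
  · obtain ⟨i, hi, hp⟩ := exists_occurrence_parikh_eq 2 hv (0, 0)
    exact ⟨i, hi, ZMod.natCast_eq_zero_iff_even.mp (congrArg Prod.fst hp)⟩
  · obtain ⟨i, hi, hp⟩ := exists_occurrence_parikh_eq 2 hv (1, 0)
    exact ⟨i, hi, ZMod.natCast_eq_one_iff_odd.mp (congrArg Prod.fst hp)⟩
end
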